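/- arXiv:2303.11985 — 7 statements merged into one kernel-verified Lean document; each statement's English description precedes it below -/
import Mathlib

section
/- Let G be a finite simple graph that contains a neighbourhood chain of Type 1 (NC-T1) of even length 2n (n ≥ 1). Then G is non-distance magic, i.e., G admits no distance magic labeling. -/
/-- The open neighborhood of `u` in `G`, as a `Finset`. -/
noncomputable def nbr {V : Type*} [Fintype V] (G : SimpleGraph V) (u : V) : Finset V :=
  (G.neighborSet u).toFinite.toFinset

/-- `f` is a distance magic labeling of `G`: a bijection from the vertex set onto
`{1, …, |V(G)|}` whose neighbor sums are all equal. -/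
def IsDistanceMagicLabeling {V : Type*} [Fintype V] (G : SimpleGraph V) (f : V → ℕ) : Prop :=
  Set.BijOn f Set.univ (Set.Icc 1 (Fintype.card V)) ∧
    ∃ S : ℕ, ∀ u : V, ∑ v ∈ nbr G u, f v = S

/-- `G` is distance magic if it admits a distance magic labeling. -/
def IsDistanceMagic {V : Type*} [Fintype V] (G : SimpleGraph V) : Prop :=
  ∃ f : V → ℕ, IsDistanceMagicLabeling G f

/-- `u 1, u 2, …, u k` (1-based indexing) is a neighbourhood chain of Type 1 (NC-T1)
of length `k` in `G`, with `N i := G.neighborSet (u i)`, `N 1 \ N 2 = {v₁}` and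
`N k \ N (k-1) = {vₖ}`. -/
def IsNCT1 {V : Type*} (G : SimpleGraph V) (k : ℕ) (u : ℕ → V) (v₁ vₖ : V) : Prop :=
  2 ≤ k ∧
  -- (1) consecutive neighborhoods meet
  (∀ i, 1 ≤ i → i + 1 ≤ k → (G.neighborSet (u i) ∩ G.neighborSet (u (i + 1))).Nonempty) ∧
  -- (2) non-consecutive neighborhoods are disjoint, except possibly the pair (N 1, N k)
  (∀ i j, 1 ≤ i → i + 2 ≤ j → j ≤ k → ¬(i = 1 ∧ j = k) →
    G.neighborSet (u i) ∩ G.neighborSet (u j) = ∅) ∧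
  -- (3) the two end differences are singletons, with distinct elements
  G.neighborSet (u 1) \ G.neighborSet (u 2) = {v₁} ∧
  G.neighborSet (u k) \ G.neighborSet (u (k - 1)) = {vₖ} ∧
  v₁ ≠ vₖ ∧
  -- (4) forward differences are contained in the next neighborhood
  (∀ i, 1 ≤ i → i + 2 ≤ k → G.neighborSet (u (i + 1)) \ G.neighborSet (u i) ⊆
    G.neighborSet (u (i + 2))) ∧
  -- (5) consecutive differences are nonempty
  (∀ i, 1 ≤ i → i + 1 ≤ k →
    (G.neighborSet (u i) \ G.neighborSet (u (i + 1))).Nonempty ∧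
    (G.neighborSet (u (i + 1)) \ G.neighborSet (u i)).Nonempty)

/-- Two NC-T1 chains `N 1 ⋯ N k` (neighborhoods of `u 1, …, u k`) and
`N (k+1) ⋯ N (2k)` (neighborhoods of `w 1, …, w k`) form a Type-2 neighbourhood
chain (NC-T2). -/
def IsNCT2 {V : Type*} (G : SimpleGraph V) (k : ℕ) (u w : ℕ → V) (a b c d : V) : Prop :=
  IsNCT1 G k u a b ∧ IsNCT1 G k w c d ∧
  -- (i)
  G.neighborSet (u 1) ∩ G.neighborSet (u 2) ∩ G.neighborSet (w 1) =
    G.neighborSet (w 1) \ G.neighborSet (w 2) ∧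
  (G.neighborSet (w 1) \ G.neighborSet (w 2)).Nonempty ∧
  G.neighborSet (u k) ∩ G.neighborSet (w k) ∩ G.neighborSet (w (k - 1)) =
    G.neighborSet (u k) \ G.neighborSet (u (k - 1)) ∧
  (G.neighborSet (u k) \ G.neighborSet (u (k - 1))).Nonempty ∧
  -- (ii)
  (∀ i, 2 ≤ i → i ≤ k - 1 →
    (G.neighborSet (u i) ∩ G.neighborSet (u (i + 1)) ∩ G.neighborSet (w i) ∩
      G.neighborSet (w (i - 1))).Nonempty)

/-- The cylindrical grid graph `P_m □ C_n`: vertices are pairs `(i, j)` with `i` a row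
index (path coordinate) and `j ∈ ZMod n` (cycle coordinate); `(i,j)` and `(i',j')` are
adjacent iff `i = i'` and `j - j' ≡ ±1 (mod n)`, or `j = j'` and `|i - i'| = 1`. -/
def PC (m n : ℕ) : SimpleGraph (Fin m × ZMod n) :=
  SimpleGraph.fromRel (fun p q =>
    (p.1 = q.1 ∧ (p.2 - q.2 = 1 ∨ q.2 - p.2 = 1)) ∨
    (p.2 = q.2 ∧ (p.1.val + 1 = q.1.val ∨ q.1.val + 1 = p.1.val)))

/-- If a finite simple graph `G` contains a neighbourhood chain of Type 1
of even length `2 * n` (`n ≥ 1`), then `G` is non-distance magic. -/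
theorem graph_with_even_NCT1_is_NDM {V : Type*} [Fintype V] (G : SimpleGraph V)
    (n : ℕ) (hn : 1 ≤ n) (u : ℕ → V) (v₁ v₂ : V) (h : IsNCT1 G (2 * n) u v₁ v₂) :
    ¬ IsDistanceMagic G := by
  rintro ⟨f, hbij, S, hS⟩
  obtain ⟨hk, -, h2, h3, h4, hne, hsub, -⟩ := h
  classical
  have mem_nbr : ∀ (x y : V), y ∈ nbr G x ↔ y ∈ G.neighborSet x := by
    intro x y; exact Set.Finite.mem_toFinset _
  set N : ℕ → Finset V := fun i => nbr G (u i) with hN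
  set c : ℕ → ℕ := fun i => ∑ v ∈ N i \ N (i + 1), f v with hc
  -- splitting the neighbor sum
  have hsplit : ∀ i j : ℕ, (∑ v ∈ N i \ N j, f v) + (∑ v ∈ N i ∩ N j, f v) = S := by
    intro i j
    have hsub' : N i ∩ N j ⊆ N i := Finset.inter_subset_left
    have := Finset.sum_sdiff (f := f) hsub'
    rw [Finset.sdiff_inter_self_left] at this
    rw [this]
    exact hS (u i)
  -- Claim A
  have hA : ∀ i : ℕ, (∑ v ∈ N (i + 1) \ N i, f v) = c i := by
    intro i
    have e1 : c i + (∑ v ∈ N i ∩ N (i + 1), f v) = S := hsplit i (i + 1)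
    have e2 := hsplit (i + 1) i
    rw [Finset.inter_comm] at e2
    omega
  -- Claim B : N (i+1) \ N (i+2) = N i ∩ N (i+1)
  have hB : ∀ i : ℕ, 1 ≤ i → i + 2 ≤ 2 * n →
      N (i + 1) \ N (i + 2) = N i ∩ N (i + 1) := by
    intro i hi hik
    have hdisj : G.neighborSet (u i) ∩ G.neighborSet (u (i + 2)) = ∅ :=
      h2 i (i + 2) hi le_rfl hik (by omega)
    have hsub' := hsub i hi hik
    ext x
    simp only [Finset.mem_sdiff, Finset.mem_inter, hN, mem_nbr]
    constructor
    · rintro ⟨hx1, hx2⟩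
      refine ⟨?_, hx1⟩
      by_contra hxi
      exact hx2 (hsub' ⟨hx1, hxi⟩)
    · rintro ⟨hxi, hx1⟩
      refine ⟨hx1, fun hx2 => ?_⟩
      have : x ∈ G.neighborSet (u i) ∩ G.neighborSet (u (i + 2)) := ⟨hxi, hx2⟩
      rw [hdisj] at this
      exact this
  -- Claim: c i + c (i+1) = S
  have hstep : ∀ i : ℕ, 1 ≤ i → i + 2 ≤ 2 * n → c i + c (i + 1) = S := by
    intro i hi hik
    have e1 : c i + (∑ v ∈ N i ∩ N (i + 1), f v) = S := hsplit i (i + 1)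
    have : c (i + 1) = ∑ v ∈ N i ∩ N (i + 1), f v := by
      show (∑ v ∈ N (i + 1) \ N (i + 2), f v) = _
      rw [hB i hi hik]
    omega
  have hC : ∀ i : ℕ, 1 ≤ i → i + 3 ≤ 2 * n → c i = c (i + 2) := by
    intro i hi hik
    have e1 := hstep i hi (by omega)
    have e2 := hstep (i + 1) (by omega) (by omega)
    rw [show i + 1 + 1 = i + 2 by omega] at e2
    omega
  have hD : ∀ j : ℕ, 2 * j + 2 ≤ 2 * n → c (2 * j + 1) = c 1 := by
    intro j
    induction j with
    | zero => intro _; rfl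
    | succ m ih =>
      intro hj
      have e1 := hC (2 * m + 1) (by omega) (by omega)
      have e2 := ih (by omega)
      have : 2 * (m + 1) + 1 = 2 * m + 1 + 2 := by omega
      rw [this, ← e1, e2]
  -- c 1 = f v₁
  have hc1 : c 1 = f v₁ := by
    have : N 1 \ N 2 = {v₁} := by
      ext x
      simp only [Finset.mem_sdiff, hN, mem_nbr, Finset.mem_singleton]
      rw [show (x = v₁) ↔ x ∈ ({v₁} : Set V) from (Set.mem_singleton_iff).symm, ← h3]
      simp [Set.mem_diff]
    show (∑ v ∈ N 1 \ N (1 + 1), f v) = f v₁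
    rw [show (1 + 1 : ℕ) = 2 from rfl, this, Finset.sum_singleton]
  -- f v₂ = c (2*n - 1)
  have hv2 : f v₂ = c (2 * n - 1) := by
    have hNk : N (2 * n) \ N (2 * n - 1) = {v₂} := by
      ext x
      simp only [Finset.mem_sdiff, hN, mem_nbr, Finset.mem_singleton]
      rw [show (x = v₂) ↔ x ∈ ({v₂} : Set V) from (Set.mem_singleton_iff).symm, ← h4]
      simp [Set.mem_diff]
    have e := hA (2 * n - 1)
    rw [show 2 * n - 1 + 1 = 2 * n from by omega, hNk, Finset.sum_singleton] at e
    exact e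
  have hfin : f v₁ = f v₂ := by
    have := hD (n - 1) (by omega)
    rw [show 2 * (n - 1) + 1 = 2 * n - 1 from by omega] at this
    rw [hv2, this, hc1]
  exact hne (hbij.injOn (Set.mem_univ v₁) (Set.mem_univ v₂) hfin)
end

section
/- For every k ≥ 1 and every n ≥ 3, the cylindrical grid graph P_{2k} □ C_n (the Cartesian box product of the path on 2k vertices with the cycle on n vertices) is non-distance magic, i.e., it admits no distance magic labeling. -/
lemma mem_nbr {V : Type*} [Fintype V] (G : SimpleGraph V) (u v : V) :
    v ∈ nbr G u ↔ G.Adj u v := by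
  simp [nbr]

lemma zmod_one_ne_zero {n : ℕ} (hn : 3 ≤ n) : (1 : ZMod n) ≠ 0 := by
  intro h
  have h2 : ((1 : ℕ) : ZMod n) = 0 := by exact_mod_cast h
  have := (ZMod.natCast_eq_zero_iff 1 n).mp h2
  have := Nat.le_of_dvd one_pos this
  omega

lemma zmod_two_ne_zero {n : ℕ} (hn : 3 ≤ n) : (2 : ZMod n) ≠ 0 := by
  intro h
  have h2 : ((2 : ℕ) : ZMod n) = 0 := by exact_mod_cast h
  have := (ZMod.natCast_eq_zero_iff 2 n).mp h2
  have := Nat.le_of_dvd two_pos this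
  omega

lemma PC_adj_iff {m n : ℕ} [NeZero n] (hn : 3 ≤ n) (p q : Fin m × ZMod n) :
    (PC m n).Adj p q ↔
      ((p.1 = q.1 ∧ (q.2 = p.2 + 1 ∨ q.2 = p.2 - 1)) ∨
       (p.2 = q.2 ∧ (q.1.val = p.1.val + 1 ∨ q.1.val + 1 = p.1.val))) := by
  have h1 := zmod_one_ne_zero hn
  rw [PC, SimpleGraph.fromRel_adj]
  constructor
  · rintro ⟨hne, (⟨ha, hb | hb⟩ | ⟨ha, hb⟩) | (⟨ha, hb | hb⟩ | ⟨ha, hb⟩)⟩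
    · exact Or.inl ⟨ha, Or.inr (by linear_combination -hb)⟩
    · exact Or.inl ⟨ha, Or.inl (by linear_combination hb)⟩
    · exact Or.inr ⟨ha, by omega⟩
    · exact Or.inl ⟨ha.symm, Or.inl (by linear_combination hb)⟩
    · exact Or.inl ⟨ha.symm, Or.inr (by linear_combination -hb)⟩
    · exact Or.inr ⟨ha.symm, by omega⟩
  · rintro (⟨ha, hb | hb⟩ | ⟨ha, hb⟩)
    · refine ⟨fun he => ?_, Or.inl (Or.inl ⟨ha, Or.inr (by linear_combination hb)⟩)⟩
      rw [he] at hb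
      exact h1 (by linear_combination -hb)
    · refine ⟨fun he => ?_, Or.inl (Or.inl ⟨ha, Or.inl (by linear_combination -hb)⟩)⟩
      rw [he] at hb
      exact h1 (by linear_combination hb)
    · refine ⟨fun he => ?_, Or.inl (Or.inr ⟨ha, by omega⟩)⟩
      rw [he] at hb; omega

/-- The diagonal vertex `(a, a)`. -/
def Uv (m n : ℕ) (hm : 0 < m) (a : ℕ) : Fin m × ZMod n :=
  (⟨a % m, Nat.mod_lt a hm⟩, (a : ZMod n))

lemma mem_nbr_Uv {m n : ℕ} [NeZero n] (hn : 3 ≤ n) (hm : 0 < m) {a : ℕ} (ha : a < m)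
    (q : Fin m × ZMod n) :
    q ∈ nbr (PC m n) (Uv m n hm a) ↔
      ((q.1.val = a ∧ (q.2 = (a : ZMod n) + 1 ∨ q.2 = (a : ZMod n) - 1)) ∨
       (q.2 = (a : ZMod n) ∧ (q.1.val = a + 1 ∨ q.1.val + 1 = a))) := by
  rw [mem_nbr, PC_adj_iff hn]
  have h1 : (Uv m n hm a).1.val = a := Nat.mod_eq_of_lt ha
  have h2 : (Uv m n hm a).2 = (a : ZMod n) := rfl
  rw [h2]
  constructor
  · rintro (⟨hx, hy⟩ | ⟨hx, hy⟩)
    · exact Or.inl ⟨by rw [← hx, h1], hy⟩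
    · exact Or.inr ⟨hx.symm, by omega⟩
  · rintro (⟨hx, hy⟩ | ⟨hx, hy⟩)
    · exact Or.inl ⟨Fin.ext (by omega), hy⟩
    · exact Or.inr ⟨hx.symm, by omega⟩

lemma step_id {m n : ℕ} [NeZero n] (hn : 3 ≤ n) (hm : 0 < m) {a : ℕ} (ha : a + 2 < m) :
    nbr (PC m n) (Uv m n hm (a+1)) ∩ nbr (PC m n) (Uv m n hm (a+2)) =
      nbr (PC m n) (Uv m n hm (a+1)) \ nbr (PC m n) (Uv m n hm a) := by
  have h2z := zmod_two_ne_zero hn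
  ext q
  rw [Finset.mem_inter, Finset.mem_sdiff,
    mem_nbr_Uv hn hm (by omega) q, mem_nbr_Uv hn hm (by omega) q,
    mem_nbr_Uv hn hm (by omega) q]
  push_cast
  constructor
  · rintro ⟨hb, hc⟩
    refine ⟨hb, ?_⟩
    rintro (⟨hx, hy⟩ | ⟨hx, hy⟩) <;>
      rcases hc with ⟨hx', hy'⟩ | ⟨hx', hy'⟩
    · omega
    · omega
    · omega
    · exact h2z (by linear_combination hx - hx')
  · rintro ⟨hb, hc⟩
    refine ⟨hb, ?_⟩
    rcases hb with ⟨hx, hy | hy⟩ | ⟨hx, hy | hy⟩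
    · exact Or.inr ⟨by linear_combination hy, by omega⟩
    · exfalso; exact hc (Or.inr ⟨by linear_combination hy, by omega⟩)
    · exact Or.inl ⟨by omega, Or.inr (by linear_combination hx)⟩
    · exfalso; exact hc (Or.inl ⟨by omega, Or.inl (by linear_combination hx)⟩)

lemma base_id {m n : ℕ} [NeZero n] (hn : 3 ≤ n) (hm0 : 0 < m) (hm : 2 ≤ m) :
    nbr (PC m n) (Uv m n hm0 0) \ nbr (PC m n) (Uv m n hm0 1) =
      {(⟨0, hm0⟩, (0 : ZMod n) - 1)} := by
  have h2z := zmod_two_ne_zero hn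
  ext q
  rw [Finset.mem_sdiff, mem_nbr_Uv hn hm0 (by omega) q, mem_nbr_Uv hn hm0 (by omega) q,
    Finset.mem_singleton]
  push_cast
  constructor
  · rintro ⟨⟨hx, hy | hy⟩ | ⟨hx, hy⟩, h1⟩
    · exfalso
      exact h1 (Or.inr ⟨by linear_combination hy, by omega⟩)
    · rw [Prod.ext_iff]
      exact ⟨Fin.ext hx, by linear_combination hy⟩
    · exfalso
      rcases hy with hy | hy
      · exact h1 (Or.inl ⟨by omega, Or.inr (by linear_combination hx)⟩)
      · exact hy
  · rintro rfl
    refine ⟨Or.inl ⟨rfl, Or.inr (by push_cast; ring)⟩, ?_⟩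
    rintro (⟨hx, hy⟩ | ⟨hx, hy⟩)
    · simp at hx
    · exact h2z (by linear_combination -hx)

lemma top_id {m n : ℕ} [NeZero n] (hn : 3 ≤ n) (hm0 : 0 < m) {a : ℕ} (ha : a + 2 = m) :
    nbr (PC m n) (Uv m n hm0 (a+1)) \ nbr (PC m n) (Uv m n hm0 a) =
      {(⟨a+1, by omega⟩, (a : ZMod n) + 2)} := by
  have h2z := zmod_two_ne_zero hn
  ext q
  rw [Finset.mem_sdiff, mem_nbr_Uv hn hm0 (by omega) q, mem_nbr_Uv hn hm0 (by omega) q,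
    Finset.mem_singleton]
  push_cast
  constructor
  · rintro ⟨⟨hx, hy | hy⟩ | ⟨hx, hy | hy⟩, h0⟩
    · rw [Prod.ext_iff]
      exact ⟨Fin.ext hx, by linear_combination hy⟩
    · exfalso
      exact h0 (Or.inr ⟨by linear_combination hy, Or.inl (by omega)⟩)
    · exfalso
      have := q.1.isLt
      omega
    · exfalso
      exact h0 (Or.inl ⟨by omega, Or.inl (by linear_combination hx)⟩)
  · rintro rfl
    refine ⟨Or.inl ⟨rfl, Or.inl (by push_cast; ring)⟩, ?_⟩
    rintro (⟨hx, hy⟩ | ⟨hx, hy⟩)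
    · simp at hx
    · exact h2z (by linear_combination hx)

/-- For every `k ≥ 1` and `n ≥ 3`, the cylindrical grid graph `P_{2k} □ C_n`
is non-distance magic. -/
theorem P2k_box_Cn_is_NDM (k n : ℕ) [NeZero n] (hk : 1 ≤ k) (hn : 3 ≤ n) :
    ¬ IsDistanceMagic (PC (2 * k) n) := by
  set m := 2 * k with hmdef
  have hm : 2 ≤ m := by omega
  have hm0 : 0 < m := by omega
  rintro ⟨f, hbij, S, hS⟩
  set N : ℕ → Finset (Fin m × ZMod n) := fun a => nbr (PC m n) (Uv m n hm0 a) with hN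
  have hSum : ∀ a, ∑ v ∈ N a, f v = S := fun a => hS _
  set d : ℕ → ℕ := fun a => ∑ v ∈ N (a + 1) \ N a, f v with hd
  have hsplit : ∀ s t : Finset (Fin m × ZMod n),
      ∑ v ∈ s ∩ t, f v + ∑ v ∈ s \ t, f v = ∑ v ∈ s, f v :=
    fun s t => Finset.sum_inter_add_sum_sdiff s t f
  -- base: d 0 = f v₁
  have hb : d 0 = f (⟨0, hm0⟩, (0 : ZMod n) - 1) := by
    have e0 := hsplit (N 0) (N 1)
    have e1 := hsplit (N 1) (N 0)
    rw [hSum 0] at e0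
    rw [hSum 1] at e1
    rw [show N 0 \ N 1 = {(⟨0, hm0⟩, (0 : ZMod n) - 1)} from base_id hn hm0 hm,
      Finset.sum_singleton] at e0
    rw [Finset.inter_comm] at e1
    have e2 : ∑ v ∈ N 1 \ N 0, f v = f (⟨0, hm0⟩, (0 : ZMod n) - 1) :=
      Nat.add_left_cancel (e1.trans e0.symm)
    exact e2
  -- step: d a + d (a+1) = S
  have hii : ∀ a, a + 2 < m → d a + d (a + 1) = S := by
    intro a ha
    have e := hsplit (N (a + 2)) (N (a + 1))
    rw [hSum (a + 2), Finset.inter_comm,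
      show N (a + 1) ∩ N (a + 2) = N (a + 1) \ N a from step_id hn hm0 ha] at e
    exact e
  -- even indices all equal d 0
  have heven : ∀ t, 2 * t + 2 ≤ m → d (2 * t) = d 0 := by
    intro t
    induction t with
    | zero => intro _; rfl
    | succ s ih =>
      intro ht
      have h1 : d (2 * s) + d (2 * s + 1) = S := hii (2 * s) (by omega)
      have h2 : d (2 * s + 1) + d (2 * s + 2) = S := hii (2 * s + 1) (by omega)
      have h3 : d (2 * s) = d 0 := ih (by omega)
      have h4 : d (2 * (s + 1)) = d (2 * s + 2) := by
        have : 2 * (s + 1) = 2 * s + 2 := by ring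
        rw [this]
      omega
  have hdm2 : d (m - 2) = d 0 := by
    have h := heven (k - 1) (by omega)
    have hidx : 2 * (k - 1) = m - 2 := by omega
    rwa [hidx] at h
  -- top: d (m-2) = f v₂
  have ht : d (m - 2) = f (⟨m - 2 + 1, by omega⟩, ((m - 2 : ℕ) : ZMod n) + 2) := by
    have e := top_id (m := m) (n := n) hn hm0 (a := m - 2) (by omega)
    show ∑ v ∈ N (m - 2 + 1) \ N (m - 2), f v = _
    rw [hN]
    rw [show nbr (PC m n) (Uv m n hm0 (m - 2 + 1)) \ nbr (PC m n) (Uv m n hm0 (m - 2)) =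
      {(⟨m - 2 + 1, by omega⟩, ((m - 2 : ℕ) : ZMod n) + 2)} from e, Finset.sum_singleton]
  -- contradiction via injectivity
  have hfe : f (⟨m - 2 + 1, by omega⟩, ((m - 2 : ℕ) : ZMod n) + 2) =
      f (⟨0, hm0⟩, (0 : ZMod n) - 1) := by
    rw [← ht, hdm2, hb]
  have hv := hbij.injOn (Set.mem_univ _) (Set.mem_univ _) hfe
  have hfst := congrArg Prod.fst hv
  have : m - 2 + 1 = 0 := by
    have := congrArg Fin.val hfst
    simpa using this
  omega
end

section
/- If a finite simple graph G contains two distinct vertices u and v such that |N(u) ∩ N(v)| = deg(u) − 1 = deg(v) − 1, then G is non-distance magic, i.e., G admits no distance magic labeling. -/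
/-- If a finite simple graph `G` has two distinct vertices `u`, `v` with
`|N(u) ∩ N(v)| = deg(u) - 1 = deg(v) - 1`, then `G` is non-distance magic. -/
theorem two_vertices_common_nbhd_NDM {V : Type*} [Fintype V] [DecidableEq V]
    (G : SimpleGraph V) (u v : V) (huv : u ≠ v)
    (h1 : ((nbr G u ∩ nbr G v).card : ℤ) = ((nbr G u).card : ℤ) - 1)
    (h2 : ((nbr G u ∩ nbr G v).card : ℤ) = ((nbr G v).card : ℤ) - 1) :
    ¬ IsDistanceMagic G := by
  rintro ⟨f, hbij, S, hS⟩
  -- card of the two differences is 1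
  have hcu : (nbr G u \ nbr G v).card = 1 := by
    have h := Finset.card_inter_add_card_sdiff (nbr G u) (nbr G v)
    omega
  have hcv : (nbr G v \ nbr G u).card = 1 := by
    have h := Finset.card_inter_add_card_sdiff (nbr G v) (nbr G u)
    rw [Finset.inter_comm] at h
    omega
  obtain ⟨a, ha⟩ := Finset.card_eq_one.mp hcu
  obtain ⟨b, hb⟩ := Finset.card_eq_one.mp hcv
  have haMem : a ∈ nbr G u \ nbr G v := by rw [ha]; exact Finset.mem_singleton_self a
  have hbMem : b ∈ nbr G v \ nbr G u := by rw [hb]; exact Finset.mem_singleton_self b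
  have hab : a ≠ b := by
    intro h
    exact (Finset.mem_sdiff.mp haMem).2 (h ▸ (Finset.mem_sdiff.mp hbMem).1)
  have hsum_u : ∑ x ∈ nbr G u, f x = ∑ x ∈ nbr G u ∩ nbr G v, f x + f a := by
    have hdec : nbr G u = (nbr G u ∩ nbr G v) ∪ {a} := by
      rw [← ha]
      ext x
      simp only [Finset.mem_union, Finset.mem_inter, Finset.mem_sdiff]
      tauto
    have hdisj : Disjoint (nbr G u ∩ nbr G v) ({a} : Finset V) := by
      rw [Finset.disjoint_singleton_right]
      intro hmem
      exact (Finset.mem_sdiff.mp haMem).2 (Finset.mem_inter.mp hmem).2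
    conv_lhs => rw [hdec]
    rw [Finset.sum_union hdisj, Finset.sum_singleton]
  have hsum_v : ∑ x ∈ nbr G v, f x = ∑ x ∈ nbr G u ∩ nbr G v, f x + f b := by
    have hdec : nbr G v = (nbr G v ∩ nbr G u) ∪ {b} := by
      rw [← hb]
      ext x
      simp only [Finset.mem_union, Finset.mem_inter, Finset.mem_sdiff]
      tauto
    have hdisj : Disjoint (nbr G v ∩ nbr G u) ({b} : Finset V) := by
      rw [Finset.disjoint_singleton_right]
      intro hmem
      exact (Finset.mem_sdiff.mp hbMem).2 (Finset.mem_inter.mp hmem).2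
    conv_lhs => rw [hdec]
    rw [Finset.sum_union hdisj, Finset.sum_singleton, Finset.inter_comm]
  have hfab : f a = f b := by
    have := (hS u).trans (hS v).symm
    rw [hsum_u, hsum_v] at this
    omega
  exact hab (hbij.2.1 (Set.mem_univ a) (Set.mem_univ b) hfab)
end

section
/- For every m ≥ 2, the graph P_m □ C_3 (the Cartesian box product of the path on m vertices with the cycle on 3 vertices) is non-distance magic, i.e., it admits no distance magic labeling. -/
lemma zaux1 : ∀ b d : ZMod 3, (b - d = 1 ∨ d - b = 1) ↔ (d = b + 1 ∨ d = b - 1) := by decide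
lemma zaux2 : ∀ b : ZMod 3, b + 1 ≠ b := by decide
lemma zaux3 : ∀ b : ZMod 3, b - 1 ≠ b := by decide
lemma zaux4 : ∀ b : ZMod 3, b + 1 ≠ b - 1 := by decide

lemma mem_nbr_PC {m : ℕ} (u v : Fin m × ZMod 3) :
    v ∈ nbr (PC m 3) u ↔
      (u.1 = v.1 ∧ (v.2 = u.2 + 1 ∨ v.2 = u.2 - 1)) ∨
      (u.2 = v.2 ∧ (v.1.val = u.1.val + 1 ∨ u.1.val = v.1.val + 1)) := by
  obtain ⟨a, b⟩ := u
  obtain ⟨c, d⟩ := v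
  simp only [nbr, Set.Finite.mem_toFinset, SimpleGraph.mem_neighborSet, PC,
    SimpleGraph.fromRel_adj]
  constructor
  · rintro ⟨hne, (⟨h1, h2⟩ | ⟨h1, h2⟩) | (⟨h1, h2⟩ | ⟨h1, h2⟩)⟩
    · exact Or.inl ⟨h1, (zaux1 b d).1 h2⟩
    · exact Or.inr ⟨h1, by omega⟩
    · refine Or.inl ⟨h1.symm, ?_⟩
      rcases (zaux1 d b).1 h2 with h | h
      · exact Or.inr (by rw [h]; ring)
      · exact Or.inl (by rw [h]; ring)
    · exact Or.inr ⟨h1.symm, by omega⟩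
  · rintro (⟨h1, h2⟩ | ⟨h1, h2⟩)
    · refine ⟨?_, Or.inl (Or.inl ⟨h1, (zaux1 b d).2 h2⟩)⟩
      intro he
      have hbd : b = d := congrArg Prod.snd he
      rcases h2 with h | h
      · exact zaux2 b (by rw [← hbd] at h; exact h.symm)
      · exact zaux3 b (by rw [← hbd] at h; exact h.symm)
    · refine ⟨?_, Or.inl (Or.inr ⟨h1, by omega⟩)⟩
      intro he
      have hac : a = c := congrArg Prod.fst he
      have := (Fin.val_eq_val a c).mpr hac
      omega

lemma sum_three {α : Type*} [DecidableEq α] (f : α → ℕ) (a b c : α)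
    (hab : a ≠ b) (hac : a ≠ c) (hbc : b ≠ c) :
    ∑ v ∈ ({a, b, c} : Finset α), f v = f a + f b + f c := by
  rw [Finset.sum_insert (by simp [hab, hac]), Finset.sum_insert (by simp [hbc]),
    Finset.sum_singleton, add_assoc]

lemma sum_four {α : Type*} [DecidableEq α] (f : α → ℕ) (a b c d : α)
    (hab : a ≠ b) (hac : a ≠ c) (had : a ≠ d) (hbc : b ≠ c) (hbd : b ≠ d) (hcd : c ≠ d) :
    ∑ v ∈ ({a, b, c, d} : Finset α), f v = f a + f b + f c + f d := by
  rw [Finset.sum_insert (by simp [hab, hac, had]), Finset.sum_insert (by simp [hbc, hbd]),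
    Finset.sum_insert (by simp [hcd]), Finset.sum_singleton]
  ring

lemma nbr_first {m : ℕ} (hm : 2 ≤ m) (j : ZMod 3) :
    nbr (PC m 3) (⟨0, by omega⟩, j) =
      {((⟨0, by omega⟩ : Fin m), j + 1), ((⟨0, by omega⟩ : Fin m), j - 1),
       ((⟨1, by omega⟩ : Fin m), j)} := by
  ext ⟨c, d⟩
  rw [mem_nbr_PC]
  simp only [Finset.mem_insert, Finset.mem_singleton, Prod.mk.injEq]
  constructor
  · rintro (⟨h1, h2 | h2⟩ | ⟨h1, h2 | h2⟩)
    · exact Or.inl ⟨h1.symm, h2⟩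
    · exact Or.inr (Or.inl ⟨h1.symm, h2⟩)
    · exact Or.inr (Or.inr ⟨Fin.ext (by simpa using h2), h1.symm⟩)
    · simp at h2
  · rintro (⟨hc, hd⟩ | ⟨hc, hd⟩ | ⟨hc, hd⟩)
    · exact Or.inl ⟨hc.symm, Or.inl hd⟩
    · exact Or.inl ⟨hc.symm, Or.inr hd⟩
    · refine Or.inr ⟨hd.symm, Or.inl ?_⟩
      rw [hc]

lemma nbr_last {m : ℕ} (hm : 2 ≤ m) (j : ZMod 3) :
    nbr (PC m 3) (⟨m - 1, by omega⟩, j) =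
      {((⟨m - 1, by omega⟩ : Fin m), j + 1), ((⟨m - 1, by omega⟩ : Fin m), j - 1),
       ((⟨m - 2, by omega⟩ : Fin m), j)} := by
  ext ⟨c, d⟩
  rw [mem_nbr_PC]
  simp only [Finset.mem_insert, Finset.mem_singleton, Prod.mk.injEq]
  have hc3 := c.isLt
  constructor
  · rintro (⟨h1, h2 | h2⟩ | ⟨h1, h2 | h2⟩)
    · exact Or.inl ⟨h1.symm, h2⟩
    · exact Or.inr (Or.inl ⟨h1.symm, h2⟩)
    · omega
    · exact Or.inr (Or.inr ⟨Fin.ext (by show c.val = m - 2; omega), h1.symm⟩)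
  · rintro (⟨hc, hd⟩ | ⟨hc, hd⟩ | ⟨hc, hd⟩)
    · exact Or.inl ⟨hc.symm, Or.inl hd⟩
    · exact Or.inl ⟨hc.symm, Or.inr hd⟩
    · refine Or.inr ⟨hd.symm, Or.inr ?_⟩
      have : c.val = m - 2 := by rw [hc]
      simp only [this]; omega

lemma nbr_mid {m : ℕ} (i : ℕ) (h1 : 1 ≤ i) (h2 : i + 1 < m) (j : ZMod 3) :
    nbr (PC m 3) (⟨i, by omega⟩, j) =
      {((⟨i, by omega⟩ : Fin m), j + 1), ((⟨i, by omega⟩ : Fin m), j - 1),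
       ((⟨i - 1, by omega⟩ : Fin m), j), ((⟨i + 1, by omega⟩ : Fin m), j)} := by
  ext ⟨c, d⟩
  rw [mem_nbr_PC]
  simp only [Finset.mem_insert, Finset.mem_singleton, Prod.mk.injEq]
  constructor
  · rintro (⟨ha, hb | hb⟩ | ⟨ha, hb | hb⟩)
    · exact Or.inl ⟨ha.symm, hb⟩
    · exact Or.inr (Or.inl ⟨ha.symm, hb⟩)
    · exact Or.inr (Or.inr (Or.inr ⟨Fin.ext (by show c.val = i + 1; omega), ha.symm⟩))
    · exact Or.inr (Or.inr (Or.inl ⟨Fin.ext (by show c.val = i - 1; omega), ha.symm⟩))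
  · rintro (⟨hc, hd⟩ | ⟨hc, hd⟩ | ⟨hc, hd⟩ | ⟨hc, hd⟩)
    · exact Or.inl ⟨hc.symm, Or.inl hd⟩
    · exact Or.inl ⟨hc.symm, Or.inr hd⟩
    · refine Or.inr ⟨hd.symm, Or.inr ?_⟩
      have : c.val = i - 1 := by rw [hc]
      simp only [this]; omega
    · refine Or.inr ⟨hd.symm, Or.inl ?_⟩
      have : c.val = i + 1 := by rw [hc]
      simp only [this]

lemma pne1 {m : ℕ} {a b : Fin m} {x y : ZMod 3} (h : a ≠ b) : (a, x) ≠ (b, y) :=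
  fun he => h (congrArg Prod.fst he)

lemma pne2 {m : ℕ} {a b : Fin m} {x y : ZMod 3} (h : x ≠ y) : (a, x) ≠ (b, y) :=
  fun he => h (congrArg Prod.snd he)

theorem Pm_box_C3_is_NDM' (m : ℕ) (hm : 2 ≤ m) :
    ¬ ∃ f : Fin m × ZMod 3 → ℕ,
      Set.BijOn f Set.univ (Set.Icc 1 (Fintype.card (Fin m × ZMod 3))) ∧
        ∃ S : ℕ, ∀ u, ∑ v ∈ nbr (PC m 3) u, f v = S := by
  rintro ⟨f, hbij, S, hS⟩
  have hinj : Set.InjOn f Set.univ := hbij.2.1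
  have h0 : 0 < m := by omega
  have h1 : 1 < m := hm
  have hne01 : (⟨0, h0⟩ : Fin m) ≠ ⟨1, h1⟩ := Fin.ne_of_val_ne (show (0:ℕ) ≠ 1 by omega)
  -- row 0 equations
  have eq0 : ∀ j : ZMod 3,
      f (⟨0, h0⟩, j + 1) + f (⟨0, h0⟩, j - 1) + f (⟨1, h1⟩, j) = S := by
    intro j
    have h := hS (⟨0, h0⟩, j)
    rw [nbr_first hm j, sum_three f _ _ _ (pne2 (zaux4 j)) (pne1 hne01) (pne1 hne01)] at h
    exact h
  have z1 : (0 : ZMod 3) + 1 = 1 := by decide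
  have z2 : (0 : ZMod 3) - 1 = 2 := by decide
  have z3 : (1 : ZMod 3) + 1 = 2 := by decide
  have z4 : (1 : ZMod 3) - 1 = 0 := by decide
  have z5 : (2 : ZMod 3) + 1 = 0 := by decide
  have z6 : (2 : ZMod 3) - 1 = 1 := by decide
  have E00 := eq0 0; rw [z1, z2] at E00
  have E01 := eq0 1; rw [z3, z4] at E01
  have E02 := eq0 2; rw [z5, z6] at E02
  by_cases hm2 : m = 2
  · -- row 1 is the last row
    have eq1 : ∀ j : ZMod 3,
        f (⟨1, h1⟩, j + 1) + f (⟨1, h1⟩, j - 1) + f (⟨0, h0⟩, j) = S := by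
      intro j
      have h := hS (⟨m - 1, by omega⟩, j)
      rw [nbr_last hm j, sum_three f _ _ _ (pne2 (zaux4 j)) (pne1 ?_) (pne1 ?_)] at h
      · have e1 : (⟨m - 1, by omega⟩ : Fin m) = ⟨1, h1⟩ := Fin.ext (by show m - 1 = 1; omega)
        have e2 : (⟨m - 2, by omega⟩ : Fin m) = ⟨0, h0⟩ := Fin.ext (by show m - 2 = 0; omega)
        rw [e1, e2] at h
        exact h
      · exact Fin.ne_of_val_ne (by show m - 1 ≠ m - 2; omega)
      · exact Fin.ne_of_val_ne (by show m - 1 ≠ m - 2; omega)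
    have E10 := eq1 0; rw [z1, z2] at E10
    have E11 := eq1 1; rw [z3, z4] at E11
    have E12 := eq1 2; rw [z5, z6] at E12
    have key : f (⟨1, h1⟩, 0) = f (⟨0, h0⟩, 0) := by omega
    have := hinj (Set.mem_univ _) (Set.mem_univ _) key
    exact hne01 (congrArg Prod.fst this).symm
  · -- m ≥ 3
    have h2 : 2 < m := by omega
    have hne02 : (⟨0, h0⟩ : Fin m) ≠ ⟨2, h2⟩ := Fin.ne_of_val_ne (show (0:ℕ) ≠ 2 by omega)
    have hne12 : (⟨1, h1⟩ : Fin m) ≠ ⟨2, h2⟩ := Fin.ne_of_val_ne (show (1:ℕ) ≠ 2 by omega)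
    have eq1 : ∀ j : ZMod 3,
        f (⟨1, h1⟩, j + 1) + f (⟨1, h1⟩, j - 1) + f (⟨0, h0⟩, j) + f (⟨2, h2⟩, j) = S := by
      intro j
      have h := hS (⟨1, h1⟩, j)
      rw [nbr_mid 1 le_rfl (by omega) j] at h
      have e1 : (⟨1 - 1, by omega⟩ : Fin m) = ⟨0, h0⟩ := rfl
      have e2 : (⟨1 + 1, by omega⟩ : Fin m) = ⟨2, h2⟩ := rfl
      rw [e1, e2] at h
      rw [sum_four f _ _ _ _ (pne2 (zaux4 j)) (pne1 hne01.symm) (pne1 hne12)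
        (pne1 hne01.symm) (pne1 hne12) (pne1 hne02)] at h
      exact h
    have E10 := eq1 0; rw [z1, z2] at E10
    have E11 := eq1 1; rw [z3, z4] at E11
    have key : f (⟨2, h2⟩, 0) = f (⟨2, h2⟩, 1) := by omega
    have := hinj (Set.mem_univ _) (Set.mem_univ _) key
    have : (0 : ZMod 3) = 1 := congrArg Prod.snd this
    exact absurd this (by decide)

/-- For every `m ≥ 2`, the graph `P_m □ C_3` is non-distance magic. -/
theorem Pm_box_C3_is_NDM (m : ℕ) (hm : 2 ≤ m) : ¬ IsDistanceMagic (PC m 3) := by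
  exact fun h => Pm_box_C3_is_NDM' m hm h
end

section
/- For every m ≥ 2, the graph P_m □ C_4 (the Cartesian box product of the path on m vertices with the cycle on 4 vertices) is non-distance magic, i.e., it admits no distance magic labeling. -/
/-- For every `m ≥ 2`, the graph `P_m □ C_4` is non-distance magic. -/
theorem Pm_box_C4_is_NDM (m : ℕ) (hm : 2 ≤ m) : ¬ IsDistanceMagic (PC m 4) := by
  rintro ⟨f, hbij, S, hS⟩
  have h0 : 0 < m := by omega
  have h1 : 1 < m := by omega
  set r0 : Fin m := ⟨0, h0⟩ with hr0
  set r1 : Fin m := ⟨1, h1⟩ with hr1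
  have hz : ∀ c j : ZMod 4, (c - j = 1 ∨ j - c = 1) ↔ (j = c + 3 ∨ j = c + 1) := by decide
  have key : ∀ c : ZMod 4, nbr (PC m 4) (r0, c) =
      ({(r0, c+1), (r0, c+3), (r1, c)} : Finset (Fin m × ZMod 4)) := by
    intro c
    ext ⟨i, j⟩
    simp only [nbr, Set.Finite.mem_toFinset, SimpleGraph.mem_neighborSet, PC,
      SimpleGraph.fromRel_adj, Finset.mem_insert, Finset.mem_singleton, Prod.mk.injEq,
      Ne, Prod.ext_iff]
    constructor
    · rintro ⟨hne, h⟩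
      have h' : (i = r0 ∧ (j = c + 3 ∨ j = c + 1)) ∨ (j = c ∧ i = r1) := by
        rcases h with (⟨hi, hj⟩ | ⟨hj, hi⟩) | (⟨hi, hj⟩ | ⟨hj, hi⟩)
        · exact Or.inl ⟨hi.symm, (hz c j).1 hj⟩
        · refine Or.inr ⟨hj.symm, ?_⟩
          rcases hi with hi | hi
          · exact Fin.ext (by simpa [hr0, hr1] using hi.symm)
          · simp [hr0] at hi
        · exact Or.inl ⟨hi, (hz c j).1 hj.symm⟩
        · refine Or.inr ⟨hj, ?_⟩
          rcases hi with hi | hi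
          · simp [hr0] at hi
          · exact Fin.ext (by simpa [hr0, hr1] using hi.symm)
      tauto
    · have hc1 : c ≠ c + 1 := by revert c; decide
      have hc3 : c ≠ c + 3 := by revert c; decide
      have hd1 : c - (c + 1) ≠ 1 ∧ (c + 1) - c = 1 := by revert c; decide
      have hd3 : c - (c + 3) = 1 := by revert c; decide
      have hr : r0 ≠ r1 := by simp [hr0, hr1, Fin.ext_iff]
      rintro (⟨hi, hj⟩ | ⟨hi, hj⟩ | ⟨hi, hj⟩)
      · subst hi; subst hj
        exact ⟨fun h => hc1 h.2, Or.inl (Or.inl ⟨rfl, Or.inr hd1.2⟩)⟩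
      · subst hi; subst hj
        exact ⟨fun h => hc3 h.2, Or.inl (Or.inl ⟨rfl, Or.inl hd3⟩)⟩
      · subst hi; subst hj
        exact ⟨fun h => hr h.1, Or.inl (Or.inr ⟨rfl, Or.inl (by simp [hr0, hr1])⟩)⟩
  have e1 := hS (r0, 0)
  have e2 := hS (r0, 2)
  rw [key 0] at e1
  rw [key 2] at e2
  norm_num at e1 e2
  rw [show ((5:ZMod 4)) = 1 from by decide] at e2
  have h31 : ((r0, (3:ZMod 4))) ≠ (r0, 1) := by simp; decide
  have h13 : ((r0, (1:ZMod 4))) ≠ (r0, 3) := by simp; decide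
  have hab : ((r0, (1:ZMod 4))) ≠ (r1, 0) := by simp [hr0, hr1, Fin.ext_iff]
  have hcb : ((r0, (3:ZMod 4))) ≠ (r1, 0) := by simp [hr0, hr1, Fin.ext_iff]
  have hab2 : ((r0, (3:ZMod 4))) ≠ (r1, 2) := by simp [hr0, hr1, Fin.ext_iff]
  have hcb2 : ((r0, (1:ZMod 4))) ≠ (r1, 2) := by simp [hr0, hr1, Fin.ext_iff]
  rw [Finset.sum_insert (by simp [h13, hab]), Finset.sum_insert (by simp [hcb]),
    Finset.sum_singleton] at e1
  rw [Finset.sum_insert (by simp [h31, hab2]), Finset.sum_insert (by simp [hcb2]),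
    Finset.sum_singleton] at e2
  have heq : f (r1, 0) = f (r1, 2) := by omega
  have : (r1, (0 : ZMod 4)) = (r1, 2) :=
    hbij.injOn (Set.mem_univ _) (Set.mem_univ _) heq
  have h02 : (0 : ZMod 4) = 2 := congrArg Prod.snd this
  exact absurd h02 (by decide)
end

section
/- Let G be a finite simple graph containing a neighbourhood chain of Type 1 (NC-T1) u_1,…,u_k of length k, with N_i = N(u_i), and let f be a distance magic labeling of G. Then ∑_{x ∈ N_{i+1} \ N_i} f(x) = ∑_{x ∈ N_{i+3} \ N_{i+2}} f(x) for every i with 1 ≤ i ≤ k−3; in particular all the sums ∑_{x ∈ N_2 \ N_1} f(x), ∑_{x ∈ N_4 \ N_3} f(x), …, over differences with an even top index, are equal. -/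
lemma sum_diff_symm {V : Type*} [Fintype V] [DecidableEq V] (G : SimpleGraph V)
    (f : V → ℕ) (hf : IsDistanceMagicLabeling G f) (a b : V) :
    ∑ x ∈ nbr G a \ nbr G b, f x = ∑ x ∈ nbr G b \ nbr G a, f x := by
  obtain ⟨S, hS⟩ := hf.2
  have ha : ∑ x ∈ nbr G a ∩ nbr G b, f x + ∑ x ∈ nbr G a \ nbr G b, f x = S := by
    rw [Finset.sum_inter_add_sum_sdiff]; exact hS a
  have hb : ∑ x ∈ nbr G a ∩ nbr G b, f x + ∑ x ∈ nbr G b \ nbr G a, f x = S := by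
    rw [Finset.inter_comm, Finset.sum_inter_add_sum_sdiff]; exact hS b
  omega

/-- If `G` contains an NC-T1 `u 1, …, u k` and `f` is a distance magic
labeling of `G`, then `∑_{x ∈ N_{i+1} \ N_i} f x = ∑_{x ∈ N_{i+3} \ N_{i+2}} f x` for
`1 ≤ i ≤ k - 3`; in particular all the sums over differences with an even top index,
`∑_{x ∈ N_2 \ N_1} f x, ∑_{x ∈ N_4 \ N_3} f x, …`, are equal. -/
theorem NCT1_alternating_sums {V : Type*} [Fintype V] [DecidableEq V] (G : SimpleGraph V)
    (k : ℕ) (u : ℕ → V) (v₁ vₖ : V) (h : IsNCT1 G k u v₁ vₖ)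
    (f : V → ℕ) (hf : IsDistanceMagicLabeling G f) :
    (∀ i, 1 ≤ i → i + 3 ≤ k →
      ∑ x ∈ nbr G (u (i + 1)) \ nbr G (u i), f x
        = ∑ x ∈ nbr G (u (i + 3)) \ nbr G (u (i + 2)), f x) ∧
    (∀ i j, 1 ≤ i → 1 ≤ j → 2 * i ≤ k → 2 * j ≤ k →
      ∑ x ∈ nbr G (u (2 * i)) \ nbr G (u (2 * i - 1)), f x
        = ∑ x ∈ nbr G (u (2 * j)) \ nbr G (u (2 * j - 1)), f x) := by
  obtain ⟨hk, h1, h2, h3a, h3b, h3c, h4, h5⟩ := h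
  have part1 : ∀ i, 1 ≤ i → i + 3 ≤ k →
      ∑ x ∈ nbr G (u (i + 1)) \ nbr G (u i), f x
        = ∑ x ∈ nbr G (u (i + 3)) \ nbr G (u (i + 2)), f x := by
    intro i hi hik
    have d1 : G.neighborSet (u i) ∩ G.neighborSet (u (i + 2)) = ∅ :=
      h2 i (i + 2) hi (by omega) (by omega) (by omega)
    have d2 : G.neighborSet (u (i + 1)) ∩ G.neighborSet (u (i + 3)) = ∅ := by
      have := h2 (i + 1) (i + 3) (by omega) (by omega) (by omega) (by omega)
      exact this
    have s1 : G.neighborSet (u (i + 1)) \ G.neighborSet (u i) ⊆ G.neighborSet (u (i + 2)) :=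
      h4 i hi (by omega)
    have s2 : G.neighborSet (u (i + 2)) \ G.neighborSet (u (i + 1)) ⊆ G.neighborSet (u (i + 3)) := by
      have := h4 (i + 1) (by omega) (by omega)
      convert this using 3 <;> omega
    have key : nbr G (u (i + 1)) \ nbr G (u i) = nbr G (u (i + 2)) \ nbr G (u (i + 3)) := by
      ext x
      simp only [Finset.mem_sdiff, nbr, Set.Finite.mem_toFinset]
      constructor
      · rintro ⟨hx1, hx0⟩
        refine ⟨s1 ⟨hx1, hx0⟩, fun hx3 => ?_⟩
        have : x ∈ G.neighborSet (u (i + 1)) ∩ G.neighborSet (u (i + 3)) := ⟨hx1, hx3⟩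
        rw [d2] at this; exact this
      · rintro ⟨hx2, hx3⟩
        have hx1 : x ∈ G.neighborSet (u (i + 1)) := by
          by_contra hx1
          exact hx3 (s2 ⟨hx2, hx1⟩)
        refine ⟨hx1, fun hx0 => ?_⟩
        have : x ∈ G.neighborSet (u i) ∩ G.neighborSet (u (i + 2)) := ⟨hx0, hx2⟩
        rw [d1] at this; exact this
    rw [key]
    exact sum_diff_symm G f hf (u (i + 2)) (u (i + 3))
  refine ⟨part1, ?_⟩
  have base : ∀ j, 1 ≤ j → 2 * j ≤ k →
      ∑ x ∈ nbr G (u (2 * j)) \ nbr G (u (2 * j - 1)), f x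
        = ∑ x ∈ nbr G (u 2) \ nbr G (u 1), f x := by
    intro j
    induction j with
    | zero => omega
    | succ n ih =>
      intro _ hjk
      rcases Nat.eq_or_lt_of_le (show 1 ≤ n + 1 by omega) with h' | h'
      · simp [← h']
      · have hn : 1 ≤ n := by omega
        have hstep := part1 (2 * n - 1) (by omega) (by omega)
        have e1 : 2 * n - 1 + 1 = 2 * n := by omega
        have e2 : 2 * n - 1 + 3 = 2 * (n + 1) := by omega
        have e3 : 2 * n - 1 + 2 = 2 * (n + 1) - 1 := by omega
        rw [e1, e2, e3] at hstep
        rw [← hstep]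
        exact ih hn (by omega)
  intro i j hi hj hik hjk
  rw [base i hi hik, base j hj hjk]
end

section
/- Let G be a finite simple graph containing a neighbourhood chain of Type 1 (NC-T1) u_1,…,u_k of length k, with N_i = N(u_i), N_1 \ N_2 = {v_1} and N_k \ N_{k−1} = {v_k}, and let f be a distance magic labeling of G. Then ∑_{x ∈ N_2 \ N_1} f(x) = f(v_1) and ∑_{x ∈ N_k \ N_{k−1}} f(x) = ∑_{x ∈ N_{k−1} \ N_k} f(x) = f(v_k). -/
/-- If `G` contains an NC-T1 `u 1, …, u k` with `N 1 \ N 2 = {v₁}` and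
`N k \ N (k-1) = {vₖ}`, and `f` is a distance magic labeling of `G`, then
`∑_{x ∈ N_2 \ N_1} f x = f v₁` and
`∑_{x ∈ N_k \ N_{k-1}} f x = ∑_{x ∈ N_{k-1} \ N_k} f x = f vₖ`. -/
theorem NCT1_end_sums {V : Type*} [Fintype V] [DecidableEq V] (G : SimpleGraph V)
    (k : ℕ) (u : ℕ → V) (v₁ vₖ : V) (h : IsNCT1 G k u v₁ vₖ)
    (f : V → ℕ) (hf : IsDistanceMagicLabeling G f) :
    ∑ x ∈ nbr G (u 2) \ nbr G (u 1), f x = f v₁ ∧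
    ∑ x ∈ nbr G (u k) \ nbr G (u (k - 1)), f x = f vₖ ∧
    ∑ x ∈ nbr G (u (k - 1)) \ nbr G (u k), f x = f vₖ := by
  obtain ⟨hk, -, -, h12, hkk, -, -, -⟩ := h
  obtain ⟨-, S, hS⟩ := hf
  have mem_nbr : ∀ a x : V, x ∈ nbr G a ↔ x ∈ G.neighborSet a := by
    intro a x; simp [nbr, Set.Finite.mem_toFinset]
  have key : ∀ a b : V, ∑ x ∈ nbr G a \ nbr G b, f x = ∑ x ∈ nbr G b \ nbr G a, f x := by
    intro a b
    have h1 := Finset.sum_inter_add_sum_sdiff (nbr G a) (nbr G b) f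
    have h2 := Finset.sum_inter_add_sum_sdiff (nbr G b) (nbr G a) f
    rw [Finset.inter_comm] at h2
    rw [hS a] at h1; rw [hS b] at h2
    omega
  have single : ∀ a b w : V, G.neighborSet a \ G.neighborSet b = {w} →
      nbr G a \ nbr G b = {w} := by
    intro a b w hab
    ext x
    simp only [Finset.mem_sdiff, mem_nbr, Finset.mem_singleton]
    rw [show (x ∈ G.neighborSet a ∧ x ∉ G.neighborSet b) ↔
        x ∈ G.neighborSet a \ G.neighborSet b from Iff.rfl, hab]
    simp
  refine ⟨?_, ?_, ?_⟩
  · rw [key, single _ _ _ h12, Finset.sum_singleton]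
  · rw [single _ _ _ hkk, Finset.sum_singleton]
  · rw [key, single _ _ _ hkk, Finset.sum_singleton]
end
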